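/- arXiv:2308.14116 — 10 statements merged into one kernel-verified Lean document; each statement's English description precedes it below -/
import Mathlib

section
/- Let G be a graph with an independent set I such that |I| > |N(I)|. Then G admits a partition (C, H, R) of its vertex set with ∅ ≠ C ⊆ I and H ⊆ N(I) such that: (1) there is no edge between C and R; (2) C is an independent set; and (3) there is an injective map M : H → C with {x, M(x)} an edge of G for all x ∈ H. -/
variable {V : Type*}

/-- Open neighborhood of a vertex set: `N(X) = (∪_{v∈X} N(v)) \ X`. -/
def setNbhd (G : SimpleGraph V) (X : Set V) : Set V :=
  {u | u ∉ X ∧ ∃ v ∈ X, G.Adj v u}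

theorem stmt2 [Fintype V] (G : SimpleGraph V) (I : Set V)
    (hI : ∀ a ∈ I, ∀ b ∈ I, ¬ G.Adj a b)
    (hbig : (setNbhd G I).ncard < I.ncard) :
    ∃ C H R : Set V,
      C.Nonempty ∧ C ⊆ I ∧ H ⊆ setNbhd G I ∧
      -- (C, H, R) is a partition of the vertex set
      C ∪ H ∪ R = Set.univ ∧ Disjoint C H ∧ Disjoint C R ∧ Disjoint H R ∧
      -- (1) no edge between C and R
      (∀ c ∈ C, ∀ r ∈ R, ¬ G.Adj c r) ∧
      -- (2) C is an independent set
      (∀ a ∈ C, ∀ b ∈ C, ¬ G.Adj a b) ∧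
      -- (3) injective M : H → C matching H into C
      (∃ M : V → V, Set.InjOn M H ∧ ∀ x ∈ H, M x ∈ C ∧ G.Adj x (M x)) := by
  classical
  -- choose C ⊆ I minimizing |N(C)| - |C|
  obtain ⟨C, hCI, hmin⟩ :
      ∃ C ∈ {X : Set V | X ⊆ I},
        ∀ X ∈ {X : Set V | X ⊆ I},
          ((setNbhd G C).ncard : ℤ) - C.ncard ≤ ((setNbhd G X).ncard : ℤ) - X.ncard :=
    Set.exists_min_image _ (fun X => ((setNbhd G X).ncard : ℤ) - X.ncard)
      (Set.toFinite _) ⟨I, fun _ hx => hx⟩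
  have hCI : C ⊆ I := hCI
  have hneg : ((setNbhd G C).ncard : ℤ) - C.ncard < 0 :=
    lt_of_le_of_lt (hmin I (fun _ hx => hx)) (by
      have : ((setNbhd G I).ncard : ℤ) < I.ncard := by exact_mod_cast hbig
      linarith)
  set H := setNbhd G C with hHdef
  have hCne : C.Nonempty := by
    rw [← Set.ncard_pos]
    have : (H.ncard : ℤ) < C.ncard := by linarith
    omega
  -- Hall's condition
  let t : ↥H → Finset V := fun h => ((C ∩ {c | G.Adj ↑h c}).toFinite).toFinset
  have hall : ∀ s : Finset ↥H, s.card ≤ (s.biUnion t).card := by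
    intro s
    by_contra hlt
    push_neg at hlt
    set S : Set V := ↑(s.image (fun h : ↥H => (h : V))) with hSdef
    set T : Set V := ↑(s.biUnion t) with hTdef
    have hScard : S.ncard = s.card := by
      rw [hSdef, Set.ncard_coe_finset, Finset.card_image_of_injective _ Subtype.coe_injective]
    have hTcard : T.ncard = (s.biUnion t).card := by rw [hTdef, Set.ncard_coe_finset]
    have hTC : T ⊆ C := by
      intro c hc
      rw [hTdef] at hc
      simp only [Finset.coe_biUnion, Finset.mem_coe, Set.mem_iUnion] at hc
      obtain ⟨h, _, hc⟩ := hc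
      have := (Set.Finite.mem_toFinset _).mp hc
      exact this.1
    have hSH : S ⊆ H := by
      rintro x hx
      rw [hSdef] at hx
      simp only [Finset.coe_image, Set.mem_image, Finset.mem_coe] at hx
      obtain ⟨h, _, rfl⟩ := hx
      exact h.2
    set C' : Set V := C \ T with hC'def
    have hsub : setNbhd G C' ⊆ H \ S := by
      rintro u ⟨huC', v, hvC', hadj⟩
      have hvC : v ∈ C := hvC'.1
      have huI : u ∉ I := fun huI => hI v (hCI hvC) u huI hadj
      have huC : u ∉ C := fun h => huI (hCI h)
      refine ⟨⟨huC, v, hvC, hadj⟩, ?_⟩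
      intro huS
      rw [hSdef] at huS
      simp only [Finset.coe_image, Set.mem_image, Finset.mem_coe] at huS
      obtain ⟨h, hhs, rfl⟩ := huS
      exact hvC'.2 (by
        rw [hTdef]
        simp only [Finset.coe_biUnion, Finset.mem_coe, Set.mem_iUnion]
        exact ⟨h, hhs, (Set.Finite.mem_toFinset _).mpr ⟨hvC, hadj.symm⟩⟩)
    have h1 : (setNbhd G C').ncard ≤ H.ncard - S.ncard := by
      calc (setNbhd G C').ncard ≤ (H \ S).ncard := Set.ncard_le_ncard hsub (Set.toFinite _)
        _ = H.ncard - S.ncard := Set.ncard_diff hSH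
    have h2 : C'.ncard = C.ncard - T.ncard := Set.ncard_diff hTC
    have hSle : S.ncard ≤ H.ncard := Set.ncard_le_ncard hSH (Set.toFinite _)
    have hTle : T.ncard ≤ C.ncard := Set.ncard_le_ncard hTC (Set.toFinite _)
    have hmin' := hmin C' (fun x hx => hCI hx.1)
    have hTS : T.ncard < S.ncard := by rw [hScard, hTcard]; exact hlt
    have h1' : ((setNbhd G C').ncard : ℤ) ≤ (H.ncard : ℤ) - S.ncard := by
      rw [← Nat.cast_sub hSle]; exact_mod_cast h1
    have h2' : (C'.ncard : ℤ) = (C.ncard : ℤ) - T.ncard := by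
      rw [← Nat.cast_sub hTle]; exact_mod_cast h2
    have : (S.ncard : ℤ) ≤ T.ncard := by
      have := hmin'
      rw [h2'] at this
      linarith
    omega
  obtain ⟨f, hfinj, hft⟩ := (Finset.all_card_le_biUnion_card_iff_exists_injective t).mp hall
  -- assemble
  refine ⟨C, H, (C ∪ H)ᶜ, hCne, hCI, ?_, ?_, ?_, ?_, ?_, ?_, ?_, ?_⟩
  · rintro x ⟨hxC, v, hvC, hadj⟩
    exact ⟨fun hxI => hI v (hCI hvC) x hxI hadj, v, hCI hvC, hadj⟩
  · rw [Set.union_compl_self]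
  · exact Set.disjoint_left.mpr fun x hxC hxH => hxH.1 hxC
  · exact Set.disjoint_left.mpr fun x hxC hxR => hxR (Or.inl hxC)
  · exact Set.disjoint_left.mpr fun x hxH hxR => hxR (Or.inr hxH)
  · rintro c hc r hr hadj
    exact hr (Or.inr ⟨fun h => hr (Or.inl h), c, hc, hadj⟩)
  · intro a ha b hb
    exact hI a (hCI ha) b (hCI hb)
  · refine ⟨fun x => if hx : x ∈ H then f ⟨x, hx⟩ else x, ?_, ?_⟩
    · intro x hx y hy hxy
      simp only [dif_pos hx, dif_pos hy] at hxy
      have := hfinj hxy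
      exact congrArg Subtype.val this
    · intro x hx
      simp only [dif_pos hx]
      have := hft ⟨x, hx⟩
      have hm := (Set.Finite.mem_toFinset _).mp this
      exact ⟨hm.1, hm.2⟩
end

section
/- Let (C, H, R) be an AIM crown decomposition of a graph G that admits at least one AIM-deletion set. Then G has a minimum-size AIM-deletion set S with H ⊆ S. -/
variable {V : Type*}

/-- `S` is an AIM-deletion set of `G`: every vertex of `G − S` has degree exactly 1
in `G − S`, phrased as having a unique neighbor outside `S`. -/
def IsAIMDel (G : SimpleGraph V) (S : Set V) : Prop :=
  ∀ v ∉ S, ∃! u, u ∉ S ∧ G.Adj v u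

/-- `(C, H, R)` is an AIM crown decomposition of `G`. -/
def IsAIMCrown (G : SimpleGraph V) (C H R : Set V) : Prop :=
  -- partition of the vertex set
  (C ∪ H ∪ R = Set.univ) ∧ Disjoint C H ∧ Disjoint C R ∧ Disjoint H R ∧
  -- (1) no edge between C and R
  (∀ c ∈ C, ∀ r ∈ R, ¬ G.Adj c r) ∧
  -- (2) G[C] is an induced matching
  (∀ v ∈ C, ∃! u, u ∈ C ∧ G.Adj v u) ∧
  -- (3) injective map from H to edges of G[C], each v ∈ H adjacent to an endpoint of M(v)
  (∃ M : V → Sym2 V, Set.InjOn M H ∧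
    ∀ v ∈ H, ∃ a b, M v = s(a, b) ∧ a ∈ C ∧ b ∈ C ∧ G.Adj a b ∧ (G.Adj v a ∨ G.Adj v b))

theorem stmt3 [Fintype V] (G : SimpleGraph V) (C H R : Set V)
    (hcrown : IsAIMCrown G C H R) (hex : ∃ S, IsAIMDel G S) :
    ∃ S, IsAIMDel G S ∧ H ⊆ S ∧ ∀ S', IsAIMDel G S' → S.ncard ≤ S'.ncard := by
  classical
  obtain ⟨hpart, hCH, hCR, hHR, hnoCR, hmatch, M, hMinj, hM⟩ := hcrown
  have htri : ∀ v : V, v ∈ C ∨ v ∈ H ∨ v ∈ R := by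
    intro v
    have : v ∈ C ∪ H ∪ R := hpart ▸ Set.mem_univ v
    rcases this with (h | h) | h
    · exact Or.inl h
    · exact Or.inr (Or.inl h)
    · exact Or.inr (Or.inr h)
  -- minimum solution S'
  obtain ⟨S₀, hS₀⟩ := hex
  have hne : {n | ∃ S, IsAIMDel G S ∧ S.ncard = n}.Nonempty := ⟨S₀.ncard, S₀, hS₀, rfl⟩
  obtain ⟨S', hS', hcardS'⟩ := Nat.sInf_mem hne
  have hmin : ∀ S'', IsAIMDel G S'' → S'.ncard ≤ S''.ncard := by
    intro S'' h
    rw [hcardS']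
    exact Nat.sInf_le ⟨S'', h, rfl⟩
  -- skolemize the edge map
  have hM' : ∀ v, ∃ x y, v ∈ H →
      (M v = s(x, y) ∧ x ∈ C ∧ y ∈ C ∧ G.Adj x y ∧ (G.Adj v x ∨ G.Adj v y)) := by
    intro v
    by_cases hv : v ∈ H
    · obtain ⟨x, y, h1, h2, h3, h4, h5⟩ := hM v hv
      exact ⟨x, y, fun _ => ⟨h1, h2, h3, h4, h5⟩⟩
    · exact ⟨v, v, fun h => absurd h hv⟩
  choose a b hab using hM'
  have haC : ∀ h ∈ H, a h ∈ C := fun h hh => (hab h hh).2.1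
  have hbC : ∀ h ∈ H, b h ∈ C := fun h hh => (hab h hh).2.2.1
  have habAdj : ∀ h ∈ H, G.Adj (a h) (b h) := fun h hh => (hab h hh).2.2.2.1
  have hadjab : ∀ h ∈ H, G.Adj h (a h) ∨ G.Adj h (b h) := fun h hh => (hab h hh).2.2.2.2
  -- key: edges are determined by any endpoint; disjointness of matching edges
  have hkey : ∀ h ∈ H, ∀ v, (v = a h ∨ v = b h) → ∃ w, w ∈ C ∧ G.Adj v w ∧ M h = s(v, w) := by
    intro h hh v hv
    rcases hv with rfl | rfl
    · exact ⟨b h, hbC h hh, habAdj h hh, (hab h hh).1⟩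
    · exact ⟨a h, haC h hh, (habAdj h hh).symm, (hab h hh).1.trans (Sym2.eq_swap)⟩
  have hdisj : ∀ h₁ ∈ H, ∀ h₂ ∈ H, ∀ v, (v = a h₁ ∨ v = b h₁) → (v = a h₂ ∨ v = b h₂) →
      h₁ = h₂ := by
    intro h₁ hh₁ h₂ hh₂ v hv₁ hv₂
    obtain ⟨w₁, hw₁C, hadj₁, hM₁⟩ := hkey h₁ hh₁ v hv₁
    obtain ⟨w₂, hw₂C, hadj₂, hM₂⟩ := hkey h₂ hh₂ v hv₂
    have hvC : v ∈ C := by rcases hv₁ with rfl | rfl; exacts [haC h₁ hh₁, hbC h₁ hh₁]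
    obtain ⟨u, _, huniq⟩ := hmatch v hvC
    have : w₁ = w₂ := (huniq w₁ ⟨hw₁C, hadj₁⟩).trans (huniq w₂ ⟨hw₂C, hadj₂⟩).symm
    exact hMinj hh₁ hh₂ (hM₁.trans (this ▸ hM₂.symm))
  -- the sets
  set P' : Set V := {r | r ∈ R ∧ r ∉ S' ∧ ∃ h ∈ H, h ∉ S' ∧ G.Adj r h} with hP'def
  set S : Set V := H ∪ ((S' ∩ R) ∪ P') with hSdef
  have hP'R : P' ⊆ R := fun r hr => hr.1
  have hHS : H ⊆ S := Set.subset_union_left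
  -- S is an AIM-deletion set
  have hSdel : IsAIMDel G S := by
    intro v hv
    have hvH : v ∉ H := fun h => hv (hHS h)
    rcases htri v with hvC | hvH' | hvR
    · -- v ∈ C
      obtain ⟨u, ⟨huC, hadj⟩, huniq⟩ := hmatch v hvC
      have huS : u ∉ S := by
        intro hu
        rcases hu with hu | hu | hu
        · exact Set.disjoint_left.mp hCH huC hu
        · exact Set.disjoint_left.mp hCR huC hu.2
        · exact Set.disjoint_left.mp hCR huC (hP'R hu)
      refine ⟨u, ⟨huS, hadj⟩, ?_⟩
      rintro w ⟨hwS, hadjw⟩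
      rcases htri w with hwC | hwH | hwR
      · exact huniq w ⟨hwC, hadjw⟩
      · exact absurd (hHS hwH) hwS
      · exact absurd hadjw (hnoCR v hvC w hwR)
    · exact absurd hvH' hvH
    · -- v ∈ R
      have hvS' : v ∉ S' := by
        intro h
        exact hv (Or.inr (Or.inl ⟨h, hvR⟩))
      have hvP' : v ∉ P' := fun h => hv (Or.inr (Or.inr h))
      obtain ⟨u, ⟨huS', hadj⟩, huniq⟩ := hS' v hvS'
      have huH : u ∉ H := by
        intro huH
        exact hvP' ⟨hvR, hvS', u, huH, huS', hadj⟩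
      have huC : u ∉ C := by
        intro huC
        exact hnoCR u huC v hvR hadj.symm
      have huR : u ∈ R := by
        rcases htri u with h | h | h
        exacts [absurd h huC, absurd h huH, h]
      have huP' : u ∉ P' := by
        rintro ⟨_, _, h, hhH, hhS', hadjuh⟩
        obtain ⟨w₀, _, huniq'⟩ := hS' u huS'
        have : h = v := (huniq' h ⟨hhS', hadjuh⟩).trans (huniq' v ⟨hvS', hadj.symm⟩).symm
        exact absurd (this ▸ hhH) hvH
      have huS : u ∉ S := by
        intro hu
        rcases hu with hu | hu | hu
        · exact huH hu
        · exact huS' hu.1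
        · exact huP' hu
      refine ⟨u, ⟨huS, hadj⟩, ?_⟩
      rintro w ⟨hwS, hadjw⟩
      rcases htri w with hwC | hwH | hwR
      · exact absurd hadjw.symm (hnoCR w hwC v hvR)
      · exact absurd (hHS hwH) hwS
      · have hwS' : w ∉ S' := fun h => hwS (Or.inr (Or.inl ⟨h, hwR⟩))
        exact huniq w ⟨hwS', hadjw⟩
  -- counting
  set K : Set V := H \ S' with hKdef
  set X : Set V := {h | h ∈ K ∧ a h ∈ S' ∧ b h ∈ S'} with hXdef
  have hXK : X ⊆ K := fun h hh => hh.1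
  have hKH : K ⊆ H := fun h hh => hh.1
  -- at least one endpoint in S'
  have hL1 : ∀ h ∈ K, a h ∈ S' ∨ b h ∈ S' := by
    intro h hh
    by_contra hcon
    push_neg at hcon
    obtain ⟨haS', hbS'⟩ := hcon
    have hhH := hKH hh
    rcases hadjab h hhH with hadj | hadj
    · obtain ⟨u, _, huniq⟩ := hS' (a h) haS'
      have : h = b h := (huniq h ⟨hh.2, hadj.symm⟩).trans
        (huniq (b h) ⟨hbS', habAdj h hhH⟩).symm
      exact Set.disjoint_left.mp hCH (this ▸ hbC h hhH) hhH
    · obtain ⟨u, _, huniq⟩ := hS' (b h) hbS'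
      have : h = a h := (huniq h ⟨hh.2, hadj.symm⟩).trans
        (huniq (a h) ⟨haS', (habAdj h hhH).symm⟩).symm
      exact Set.disjoint_left.mp hCH (this ▸ haC h hhH) hhH
  set c : V → V := fun h => if a h ∈ S' then a h else b h with hcdef
  set o : V → V := fun h => if a h ∈ S' then b h else a h with hodef
  have hcmem : ∀ h, c h = a h ∨ c h = b h := by
    intro h; simp only [hcdef]; split <;> simp
  have homem : ∀ h, o h = a h ∨ o h = b h := by
    intro h; simp only [hodef]; split <;> simp
  have hcS' : ∀ h ∈ K, c h ∈ S' := by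
    intro h hh
    simp only [hcdef]
    split
    · assumption
    · rcases hL1 h hh with h1 | h1; · contradiction
      exact h1
  have hco : ∀ h ∈ H, c h ≠ o h := by
    intro h hh
    have hne := (habAdj h hh).ne
    simp only [hcdef, hodef]
    split
    · exact hne
    · exact hne.symm
  have hcC : ∀ h ∈ H, c h ∈ C := by
    intro h hh; rcases hcmem h with e | e <;> rw [e]; exacts [haC h hh, hbC h hh]
  have hoC : ∀ h ∈ H, o h ∈ C := by
    intro h hh; rcases homem h with e | e <;> rw [e]; exacts [haC h hh, hbC h hh]
  have hoS'X : ∀ h ∈ X, o h ∈ S' := by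
    intro h hh
    simp only [hodef]
    split
    · exact hh.2.2
    · exact hh.2.1
  have hoNotS' : ∀ h ∈ K \ X, o h ∉ S' := by
    intro h hh
    simp only [hodef]
    split
    · intro hb
      exact hh.2 ⟨hh.1, by assumption, hb⟩
    · intro ha
      exact (by assumption : a h ∉ S') ha
  -- adjacency between c h and o h
  have hcoAdj : ∀ h ∈ H, G.Adj (c h) (o h) := by
    intro h hh
    simp only [hcdef, hodef]
    split
    · exact habAdj h hh
    · exact (habAdj h hh).symm
  -- injectivity of c on K
  have hcinj : Set.InjOn c K := by
    intro h₁ hh₁ h₂ hh₂ heq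
    exact hdisj h₁ (hKH hh₁) h₂ (hKH hh₂) (c h₁) (hcmem h₁) (heq ▸ hcmem h₂)
  have hoinj : Set.InjOn o X := by
    intro h₁ hh₁ h₂ hh₂ heq
    exact hdisj h₁ (hKH (hXK hh₁)) h₂ (hKH (hXK hh₂)) (o h₁) (homem h₁) (heq ▸ homem h₂)
  -- |K| + |X| ≤ |S' ∩ C|
  have hcount1 : K.ncard + X.ncard ≤ (S' ∩ C).ncard := by
    have himg : (c '' K) ∪ (o '' X) ⊆ S' ∩ C := by
      rintro v (⟨h, hh, rfl⟩ | ⟨h, hh, rfl⟩)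
      · exact ⟨hcS' h hh, hcC h (hKH hh)⟩
      · exact ⟨hoS'X h hh, hoC h (hKH (hXK hh))⟩
    have hdisjimg : Disjoint (c '' K) (o '' X) := by
      rw [Set.disjoint_left]
      rintro v ⟨h₁, hh₁, rfl⟩ ⟨h₂, hh₂, heq⟩
      have h21 : h₂ = h₁ := hdisj h₂ (hKH (hXK hh₂)) h₁ (hKH hh₁) (o h₂)
        (homem h₂) (by rw [heq]; exact hcmem h₁)
      exact hco h₁ (hKH hh₁) (heq.symm.trans (congrArg o h21))
    calc K.ncard + X.ncard = (c '' K).ncard + (o '' X).ncard := by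
          rw [Set.ncard_image_of_injOn hcinj, Set.ncard_image_of_injOn hoinj]
      _ = ((c '' K) ∪ (o '' X)).ncard :=
          (Set.ncard_union_eq hdisjimg (Set.toFinite _) (Set.toFinite _)).symm
      _ ≤ (S' ∩ C).ncard := Set.ncard_le_ncard himg (Set.toFinite _)
  -- injection j : P' → K
  have hj' : ∀ r, ∃ h, r ∈ P' → (h ∈ H ∧ h ∉ S' ∧ G.Adj r h) := by
    intro r
    by_cases hr : r ∈ P'
    · obtain ⟨_, _, h, hh⟩ := hr
      exact ⟨h, fun _ => hh⟩
    · exact ⟨r, fun h => absurd h hr⟩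
  choose j hj using hj'
  have hjK : ∀ r ∈ P', j r ∈ K := fun r hr => ⟨(hj r hr).1, (hj r hr).2.1⟩
  have hjinj : Set.InjOn j P' := by
    intro r₁ hr₁ r₂ hr₂ heq
    obtain ⟨h₁H, h₁S', hadj₁⟩ := hj r₁ hr₁
    obtain ⟨h₂H, h₂S', hadj₂⟩ := hj r₂ hr₂
    obtain ⟨u, _, huniq⟩ := hS' (j r₁) h₁S'
    exact (huniq r₁ ⟨hr₁.2.1, hadj₁.symm⟩).trans
      (huniq r₂ ⟨hr₂.2.1, (heq ▸ hadj₂).symm⟩).symm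
  set B' : Set V := j '' P' with hB'def
  have hB'K : B' ⊆ K := by rintro v ⟨r, hr, rfl⟩; exact hjK r hr
  -- injection g : K \ X → K \ B'
  have hg' : ∀ h, ∃ x, h ∈ K \ X → (x ∈ K ∧ G.Adj (o h) x) := by
    intro h
    by_cases hh : h ∈ K \ X
    · have hhH := hKH hh.1
      have hoS' := hoNotS' h hh
      obtain ⟨x, ⟨hxS', hxadj⟩, huniq⟩ := hS' (o h) hoS'
      have hxC : x ∉ C := by
        intro hxC
        obtain ⟨u, _, huniqC⟩ := hmatch (o h) (hoC h hhH)
        have : x = c h := (huniqC x ⟨hxC, hxadj⟩).trans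
          (huniqC (c h) ⟨hcC h hhH, (hcoAdj h hhH).symm⟩).symm
        exact hxS' (this ▸ hcS' h hh.1)
      have hxR : x ∉ R := fun hxR => hnoCR (o h) (hoC h hhH) x hxR hxadj
      have hxH : x ∈ H := by
        rcases htri x with h' | h' | h'
        exacts [absurd h' hxC, h', absurd h' hxR]
      exact ⟨x, fun _ => ⟨⟨hxH, hxS'⟩, hxadj⟩⟩
    · exact ⟨h, fun h' => absurd h' hh⟩
  choose g hg using hg'
  have hginj : Set.InjOn g (K \ X) := by
    intro h₁ hh₁ h₂ hh₂ heq
    obtain ⟨hx₁K, hadj₁⟩ := hg h₁ hh₁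
    obtain ⟨hx₂K, hadj₂⟩ := hg h₂ hh₂
    obtain ⟨u, _, huniq⟩ := hS' (g h₁) hx₁K.2
    have : o h₁ = o h₂ := (huniq (o h₁) ⟨hoNotS' h₁ hh₁, hadj₁.symm⟩).trans
      (huniq (o h₂) ⟨hoNotS' h₂ hh₂, (heq ▸ hadj₂).symm⟩).symm
    exact hdisj h₁ (hKH hh₁.1) h₂ (hKH hh₂.1) (o h₁) (homem h₁) (this ▸ homem h₂)
  have hgmaps : ∀ h ∈ K \ X, g h ∈ K \ B' := by
    intro h hh
    obtain ⟨hxK, hadj⟩ := hg h hh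
    refine ⟨hxK, ?_⟩
    rintro ⟨r, hr, heq⟩
    obtain ⟨h₁H, h₁S', hadjr⟩ := hj r hr
    obtain ⟨u, _, huniq⟩ := hS' (g h) hxK.2
    have : o h = r := (huniq (o h) ⟨hoNotS' h hh, hadj.symm⟩).trans
      (huniq r ⟨hr.2.1, (heq ▸ hadjr).symm⟩).symm
    exact Set.disjoint_left.mp hCR (hoC h (hKH hh.1)) (this ▸ hr.1)
  have hcount2 : P'.ncard ≤ X.ncard := by
    have h1 : (K \ X).ncard ≤ (K \ B').ncard :=
      Set.ncard_le_ncard_of_injOn g hgmaps hginj (Set.toFinite _)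
    have h2 : (K \ X).ncard = K.ncard - X.ncard := Set.ncard_diff hXK
    have h3 : (K \ B').ncard = K.ncard - B'.ncard := Set.ncard_diff hB'K
    have h4 : X.ncard ≤ K.ncard := Set.ncard_le_ncard hXK (Set.toFinite _)
    have h5 : B'.ncard ≤ K.ncard := Set.ncard_le_ncard hB'K (Set.toFinite _)
    have h6 : P'.ncard = B'.ncard := (Set.ncard_image_of_injOn hjinj).symm
    omega
  -- cardinality decompositions
  have hScard : S.ncard = H.ncard + (S' ∩ R).ncard + P'.ncard := by
    have d1 : Disjoint H ((S' ∩ R) ∪ P') := by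
      refine Set.disjoint_union_right.mpr ⟨?_, ?_⟩
      · exact hHR.mono_right Set.inter_subset_right
      · exact hHR.mono_right hP'R
    have d2 : Disjoint (S' ∩ R) P' := by
      rw [Set.disjoint_left]
      rintro x ⟨hxS', _⟩ hxP'
      exact hxP'.2.1 hxS'
    rw [hSdef, Set.ncard_union_eq d1 (Set.toFinite _) (Set.toFinite _),
      Set.ncard_union_eq d2 (Set.toFinite _) (Set.toFinite _)]
    ring
  have hS'card : S'.ncard = (S' ∩ C).ncard + (S' ∩ H).ncard + (S' ∩ R).ncard := by
    have heq : (S' ∩ C) ∪ (S' ∩ H) ∪ (S' ∩ R) = S' := by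
      rw [← Set.inter_union_distrib_left, ← Set.inter_union_distrib_left, hpart,
        Set.inter_univ]
    have d12 : Disjoint (S' ∩ C) (S' ∩ H) :=
      hCH.mono Set.inter_subset_right Set.inter_subset_right
    have d3 : Disjoint ((S' ∩ C) ∪ (S' ∩ H)) (S' ∩ R) :=
      Set.disjoint_union_left.mpr
        ⟨hCR.mono Set.inter_subset_right Set.inter_subset_right,
         hHR.mono Set.inter_subset_right Set.inter_subset_right⟩
    calc S'.ncard = ((S' ∩ C) ∪ (S' ∩ H) ∪ (S' ∩ R)).ncard := by rw [heq]
      _ = (S' ∩ C).ncard + (S' ∩ H).ncard + (S' ∩ R).ncard := by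
          rw [Set.ncard_union_eq d3 (Set.toFinite _) (Set.toFinite _),
            Set.ncard_union_eq d12 (Set.toFinite _) (Set.toFinite _)]
  have hHcard : H.ncard = (S' ∩ H).ncard + K.ncard := by
    have := Set.ncard_inter_add_ncard_diff_eq_ncard H S' (Set.toFinite _)
    rw [Set.inter_comm] at this
    rw [hKdef]
    omega
  refine ⟨S, hSdel, hHS, fun S'' hS'' => le_trans ?_ (hmin S'' hS'')⟩
  omega
end

section
/- Let G = (V,E) be a graph in which every connected component has more than two vertices, and let A, B ⊆ V be disjoint vertex sets such that (i) no vertex of A has a neighbor in V \ (A ∪ B), and (ii) G[A] is an induced matching. If |A| > 2|B|, then G admits an AIM crown decomposition (C, H, R) with ∅ ≠ C ⊆ A and H ⊆ B. -/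
variable {V : Type*}

/-- Hall-type crown lemma on an abstract bipartite relation. -/
lemma crown_aux {α β : Type*} (r : β → α → Prop) :
    ∀ (n : ℕ) (Bs : Finset β) (Xs : Finset α), Bs.card ≤ n → Bs.card < Xs.card →
    ∃ S : Finset α, S ⊆ Xs ∧ S.Nonempty ∧ ∃ f : β → α,
      Set.InjOn f {b | b ∈ Bs ∧ ∃ a ∈ S, r b a} ∧
      ∀ b ∈ Bs, (∃ a ∈ S, r b a) → f b ∈ S ∧ r b (f b) := by
  intro n
  induction n with
  | zero =>
    intro Bs Xs hn hlt
    classical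
    have hBs : Bs = ∅ := Finset.card_eq_zero.mp (Nat.le_zero.mp hn)
    have hXne : Xs.Nonempty := Finset.card_pos.mp (by omega)
    refine ⟨Xs, le_refl _, hXne, fun _ => hXne.choose, ?_, ?_⟩
    · intro x hx; simp [hBs] at hx
    · intro b hb; simp [hBs] at hb
  | succ n ih =>
    intro Bs Xs hn hlt
    classical
    by_cases hhall : ∀ s : Finset β, s ⊆ Bs →
        s.card ≤ (s.biUnion (fun b => Xs.filter (r b))).card
    · -- Hall's condition holds: match all of Bs into Xs, take S = Xs.
      have hXne : Xs.Nonempty := Finset.card_pos.mp (by omega)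
      have key : ∀ s : Finset {b // b ∈ Bs},
          s.card ≤ (s.biUnion (fun b => Xs.filter (r b.1))).card := by
        intro s
        have h1 : (s.image Subtype.val).card = s.card :=
          Finset.card_image_of_injective _ Subtype.val_injective
        have h2 : (s.image Subtype.val).biUnion (fun b => Xs.filter (r b))
            = s.biUnion (fun b => Xs.filter (r b.1)) := Finset.image_biUnion
        have h3 := hhall (s.image Subtype.val) (by
          intro x hx; simp only [Finset.mem_image] at hx
          obtain ⟨y, _, rfl⟩ := hx; exact y.2)
        rw [h1, h2] at h3; exact h3
      obtain ⟨f₀, hf₀inj, hf₀mem⟩ :=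
        (Finset.all_card_le_biUnion_card_iff_exists_injective
          (fun b : {b // b ∈ Bs} => Xs.filter (r b.1))).mp key
      refine ⟨Xs, le_refl _, hXne,
        fun b => if h : b ∈ Bs then f₀ ⟨b, h⟩ else hXne.choose, ?_, ?_⟩
      · intro x hx y hy hxy
        simp only [Set.mem_setOf_eq] at hx hy
        dsimp only at hxy
        rw [dif_pos hx.1, dif_pos hy.1] at hxy
        have := hf₀inj hxy
        exact congrArg Subtype.val this
      · intro b hb _
        simp only [dif_pos hb]
        have := hf₀mem ⟨b, hb⟩
        simp only [Finset.mem_filter] at this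
        exact this
    · -- Hall's condition fails: remove a violating set and recurse.
      push_neg at hhall
      obtain ⟨T, hTB, hTcard⟩ := hhall
      set N : Finset α := T.biUnion (fun b => Xs.filter (r b)) with hN
      have hTne : 0 < T.card := by omega
      have hNX : N ⊆ Xs := by
        intro x hx
        simp only [hN, Finset.mem_biUnion, Finset.mem_filter] at hx
        obtain ⟨b, _, hx, _⟩ := hx; exact hx
      have hBs' : (Bs \ T).card = Bs.card - T.card := Finset.card_sdiff_of_subset hTB
      have hXs' : (Xs \ N).card = Xs.card - N.card := Finset.card_sdiff_of_subset hNX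
      have hTB' : T.card ≤ Bs.card := Finset.card_le_card hTB
      have hNXc : N.card ≤ Xs.card := Finset.card_le_card hNX
      obtain ⟨S, hSX, hSne, f, hinj, hcond⟩ := ih (Bs \ T) (Xs \ N)
        (by omega) (by omega)
      have hset : {b | b ∈ Bs ∧ ∃ a ∈ S, r b a}
          = {b | b ∈ Bs \ T ∧ ∃ a ∈ S, r b a} := by
        ext b
        simp only [Set.mem_setOf_eq, Finset.mem_sdiff]
        constructor
        · rintro ⟨hb, a, haS, hr⟩
          refine ⟨⟨hb, ?_⟩, a, haS, hr⟩
          intro hbT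
          have haX : a ∈ Xs \ N := hSX haS
          simp only [Finset.mem_sdiff] at haX
          exact haX.2 (by
            simp only [hN, Finset.mem_biUnion, Finset.mem_filter]
            exact ⟨b, hbT, haX.1, hr⟩)
        · rintro ⟨⟨hb, _⟩, ha⟩; exact ⟨hb, ha⟩
      refine ⟨S, fun x hx => (Finset.mem_sdiff.mp (hSX hx)).1, hSne, f, ?_, ?_⟩
      · rw [hset]; exact hinj
      · intro b hb hab
        have hb' : b ∈ Bs \ T := by
          have : b ∈ {b | b ∈ Bs ∧ ∃ a ∈ S, r b a} := ⟨hb, hab⟩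
          rw [hset] at this; exact this.1
        exact hcond b hb' hab

theorem stmt4 [Fintype V] (G : SimpleGraph V) (A B : Set V)
    (hcomp : ∀ c : G.ConnectedComponent, 2 < c.supp.ncard)
    (hAB : Disjoint A B)
    -- (i) no vertex of A has a neighbor in V \ (A ∪ B)
    (hi : ∀ a ∈ A, ∀ w, G.Adj a w → w ∈ A ∪ B)
    -- (ii) G[A] is an induced matching
    (hii : ∀ v ∈ A, ∃! u, u ∈ A ∧ G.Adj v u)
    (hcard : 2 * B.ncard < A.ncard) :
    ∃ C H R : Set V, IsAIMCrown G C H R ∧ C.Nonempty ∧ C ⊆ A ∧ H ⊆ B := by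
  classical
  -- partner function
  set m : V → V := fun a => if h : a ∈ A then (hii a h).choose else a with hm
  have hmA : ∀ a ∈ A, m a ∈ A := by
    intro a ha; simp only [hm, dif_pos ha]; exact (hii a ha).choose_spec.1.1
  have hmAdj : ∀ a ∈ A, G.Adj a (m a) := by
    intro a ha; simp only [hm, dif_pos ha]; exact (hii a ha).choose_spec.1.2
  have hmUniq : ∀ a ∈ A, ∀ y, y ∈ A → G.Adj a y → y = m a := by
    intro a ha y hy hadj
    simp only [hm, dif_pos ha]
    exact (hii a ha).choose_spec.2 y ⟨hy, hadj⟩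
  have hmInv : ∀ a ∈ A, m (m a) = a := by
    intro a ha
    exact (hmUniq (m a) (hmA a ha) a ha (hmAdj a ha).symm).symm
  -- the finsets
  set Xs : Finset (Sym2 V) := A.toFinset.image (fun a => s(a, m a)) with hXs
  set Bs : Finset V := B.toFinset with hBs
  -- cardinality
  have hAX : A.toFinset.card ≤ 2 * Xs.card := by
    apply Finset.card_le_mul_card_image
    intro e he
    simp only [hXs, Finset.mem_image] at he
    obtain ⟨a, haA, rfl⟩ := he
    have hsub : (A.toFinset.filter (fun x => s(x, m x) = s(a, m a))) ⊆ {a, m a} := by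
      intro x hx
      rw [Finset.mem_filter] at hx
      have := Sym2.eq_iff.mp hx.2
      rcases this with ⟨h1, _⟩ | ⟨h1, _⟩
      · simp [h1]
      · simp [h1]
    calc (A.toFinset.filter (fun x => s(x, m x) = s(a, m a))).card
        ≤ ({a, m a} : Finset V).card := Finset.card_le_card hsub
      _ ≤ 2 := Finset.card_insert_le _ _ |>.trans (by simp)
  have hltBX : Bs.card < Xs.card := by
    have h1 : A.ncard = A.toFinset.card := Set.ncard_eq_toFinset_card' A
    have h2 : B.ncard = Bs.card := Set.ncard_eq_toFinset_card' B
    omega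
  -- the bipartite relation
  set r : V → Sym2 V → Prop := fun b e => ∃ x ∈ e, G.Adj b x with hr
  obtain ⟨S, hSX, hSne, f, hinj, hcond⟩ := crown_aux r Bs.card Bs Xs le_rfl hltBX
  -- the crown
  set C : Set V := {v | ∃ e ∈ S, v ∈ e} with hC
  set H : Set V := {b | b ∈ B ∧ ∃ c ∈ C, G.Adj b c} with hH
  -- basic facts about edges of S
  have hedge : ∀ e ∈ S, ∃ a ∈ A, e = s(a, m a) := by
    intro e he
    have := hSX he
    simp only [hXs, Finset.mem_image] at this
    obtain ⟨a, haA, rfl⟩ := this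
    exact ⟨a, Set.mem_toFinset.mp haA, rfl⟩
  have hCA : C ⊆ A := by
    intro v hv
    obtain ⟨e, heS, hve⟩ := hv
    obtain ⟨a, haA, rfl⟩ := hedge e heS
    rcases Sym2.mem_iff.mp hve with rfl | rfl
    · exact haA
    · exact hmA _ haA
  have hmC : ∀ v ∈ C, m v ∈ C ∧ G.Adj v (m v) := by
    intro v hv
    obtain ⟨e, heS, hve⟩ := hv
    obtain ⟨a, haA, rfl⟩ := hedge e heS
    rcases Sym2.mem_iff.mp hve with rfl | rfl
    · exact ⟨⟨_, heS, Sym2.mem_mk_right _ _⟩, hmAdj _ haA⟩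
    · rw [hmInv _ haA]
      exact ⟨⟨_, heS, Sym2.mem_mk_left _ _⟩, (hmAdj _ haA).symm⟩
  have hHB : H ⊆ B := fun b hb => hb.1
  -- H coincides with the set from crown_aux
  have hHset : {b | b ∈ Bs ∧ ∃ a ∈ S, r b a} = H := by
    ext b
    simp only [Set.mem_setOf_eq, hBs, Set.mem_toFinset, hH, hr, hC]
    constructor
    · rintro ⟨hb, e, heS, x, hxe, hadj⟩
      exact ⟨hb, x, ⟨e, heS, hxe⟩, hadj⟩
    · rintro ⟨hb, c, ⟨e, heS, hce⟩, hadj⟩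
      exact ⟨hb, e, heS, c, hce, hadj⟩
  refine ⟨C, H, (C ∪ H)ᶜ, ⟨?_, ?_, ?_, ?_, ?_, ?_, ?_⟩, ?_, hCA, hHB⟩
  · rw [Set.union_compl_self]
  · exact Set.disjoint_of_subset hCA hHB hAB
  · exact disjoint_compl_right.mono_left Set.subset_union_left
  · exact disjoint_compl_right.mono_left Set.subset_union_right
  · -- no edges C - R
    intro c hc w hw hadj
    have hcA : c ∈ A := hCA hc
    rcases hi c hcA w hadj with hwA | hwB
    · have : w = m c := hmUniq c hcA w hwA hadj
      exact hw (Or.inl (this ▸ (hmC c hc).1))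
    · exact hw (Or.inr ⟨hwB, c, hc, hadj.symm⟩)
  · -- induced matching on C
    intro v hv
    refine ⟨m v, ⟨(hmC v hv).1, (hmC v hv).2⟩, ?_⟩
    rintro u ⟨huC, hadj⟩
    exact hmUniq v (hCA hv) u (hCA huC) hadj
  · -- the map M
    refine ⟨f, ?_, ?_⟩
    · rw [← hHset]; exact hinj
    · intro v hv
      have hv' : v ∈ {b | b ∈ Bs ∧ ∃ a ∈ S, r b a} := by rw [hHset]; exact hv
      obtain ⟨hfS, hfr⟩ := hcond v hv'.1 hv'.2
      obtain ⟨a, haA, hfe⟩ := hedge (f v) hfS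
      refine ⟨a, m a, hfe, ⟨_, hfS, hfe ▸ Sym2.mem_mk_left _ _⟩,
        ⟨_, hfS, hfe ▸ Sym2.mem_mk_right _ _⟩, hmAdj a haA, ?_⟩
      obtain ⟨x, hxe, hadj⟩ := hfr
      rw [hfe] at hxe
      rcases Sym2.mem_iff.mp hxe with rfl | rfl
      · exact Or.inl hadj
      · exact Or.inr hadj
  · -- C nonempty
    obtain ⟨e, heS⟩ := hSne
    obtain ⟨a, haA, rfl⟩ := hedge e heS
    exact ⟨a, _, heS, Sym2.mem_mk_left _ _⟩
end

section
/- Let G be a graph, and let v be a vertex that dominates a neighbor u (i.e., N[u] ⊆ N[v]). If some maximum induced matching M of G satisfies v ∈ V(M), then there exists a maximum induced matching M' of G with {v,u} ∈ M'. -/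
variable {V : Type*}

/-- The set of endpoints of the edges of `M`. -/
def imSupp (M : Set (Sym2 V)) : Set V := {x | ∃ e ∈ M, x ∈ e}

/-- `M` is an induced matching of `G`: its edges are edges of `G` and every
vertex of `G[V(M)]` has degree exactly 1. -/
def IsIndMatching (G : SimpleGraph V) (M : Set (Sym2 V)) : Prop :=
  M ⊆ G.edgeSet ∧ ∀ v ∈ imSupp M, ∃! u, u ∈ imSupp M ∧ G.Adj v u


namespace IsIndMatching

variable {G : SimpleGraph V} {M N : Set (Sym2 V)}

/-- Distinct edges of `M` cannot share a vertex either: an edge's own endpoints are adjacent. -/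
theorem iff_adj_imp_eq :
    IsIndMatching G M ↔
      M ⊆ G.edgeSet ∧ ∀ e ∈ M, ∀ f ∈ M, ∀ x ∈ e, ∀ y ∈ f, G.Adj x y → e = f := by
  constructor
  · rintro ⟨hsub, huniq⟩
    refine ⟨hsub, fun e he f hf x hx y hy hxy => ?_⟩
    obtain ⟨x', rfl⟩ := Sym2.mem_iff_exists.mp hx
    obtain ⟨y', rfl⟩ := Sym2.mem_iff_exists.mp hy
    have hyx' : y = x' := (huniq x ⟨_, he, hx⟩).unique
      ⟨⟨_, hf, hy⟩, hxy⟩ ⟨⟨_, he, Sym2.mem_mk_right x x'⟩, hsub he⟩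
    have hxy' : x = y' := (huniq y ⟨_, hf, hy⟩).unique
      ⟨⟨_, he, hx⟩, hxy.symm⟩ ⟨⟨_, hf, Sym2.mem_mk_right y y'⟩, hsub hf⟩
    subst hyx' hxy'
    exact Sym2.eq_swap
  · rintro ⟨hsub, hdisj⟩
    refine ⟨hsub, fun x ⟨e, he, hx⟩ => ?_⟩
    obtain ⟨x', rfl⟩ := Sym2.mem_iff_exists.mp hx
    refine ⟨x', ⟨⟨_, he, Sym2.mem_mk_right x x'⟩, hsub he⟩, ?_⟩
    rintro y ⟨⟨f, hf, hy⟩, hxy⟩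
    obtain rfl := hdisj _ he f hf x hx y hy hxy
    exact (Sym2.mem_iff.mp hy).resolve_left hxy.ne'

theorem mono (hNM : N ⊆ M) (hM : IsIndMatching G M) : IsIndMatching G N := by
  rw [iff_adj_imp_eq] at hM ⊢
  exact ⟨hNM.trans hM.1, fun e he f hf => hM.2 e (hNM he) f (hNM hf)⟩

theorem insert_of_forall_not_adj {a b : V} (hM : IsIndMatching G M) (hab : G.Adj a b)
    (hfar : ∀ f ∈ M, ∀ x ∈ s(a, b), ∀ y ∈ f, ¬G.Adj x y) :
    IsIndMatching G (insert s(a, b) M) := by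
  rw [iff_adj_imp_eq] at hM ⊢
  refine ⟨Set.insert_subset hab hM.1, ?_⟩
  rintro e (rfl | he) f (rfl | hf) x hx y hy hxy
  · rfl
  · exact (hfar f hf x hx y hy hxy).elim
  · exact (hfar e he y hy x hx hxy.symm).elim
  · exact hM.2 e he f hf x hx y hy hxy

/-- No endpoint of an edge of `M` other than `vw` lies in `N[v]`, which contains `N(u)`. -/
theorem exchange {v w u : V} (hM : IsIndMatching G M) (hvw : s(v, w) ∈ M) (hvu : G.Adj v u)
    (hdom : ∀ x, G.Adj u x → x = v ∨ G.Adj v x) :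
    IsIndMatching G (insert s(v, u) (M \ {s(v, w)})) := by
  have hdisj := (iff_adj_imp_eq.mp hM).2
  refine (hM.mono Set.sdiff_subset).insert_of_forall_not_adj hvu ?_
  rintro f ⟨hf, hfvw⟩ x hx y hy hxy
  have hfar_v : ¬G.Adj v y := fun h =>
    hfvw (hdisj _ hvw f hf v (Sym2.mem_mk_left v w) y hy h).symm
  have hv_notMem : v ∉ f := fun h =>
    hfvw (hdisj _ hvw f hf w (Sym2.mem_mk_right v w) v h (hM.1 hvw).symm).symm
  rcases Sym2.mem_iff.mp hx with rfl | rfl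
  · exact hfar_v hxy
  · rcases hdom y hxy with rfl | h
    · exact hv_notMem hy
    · exact hfar_v h

end IsIndMatching

theorem stmt5_general (G : SimpleGraph V) (v u : V) (hadj : G.Adj v u)
    -- v dominates u: N[u] ⊆ N[v]
    (hdom : (G.neighborSet u ∪ {u}) ⊆ (G.neighborSet v ∪ {v}))
    (M : Set (Sym2 V)) (hM : IsIndMatching G M)
    (hmax : ∀ M', IsIndMatching G M' → M'.ncard ≤ M.ncard)
    (hv : v ∈ imSupp M) :
    ∃ M', IsIndMatching G M' ∧ (∀ M'', IsIndMatching G M'' → M''.ncard ≤ M'.ncard) ∧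
      s(v, u) ∈ M' := by
  by_cases hvuM : s(v, u) ∈ M
  · exact ⟨M, hM, hmax, hvuM⟩
  obtain ⟨e, he, hve⟩ := hv
  obtain ⟨w, rfl⟩ := Sym2.mem_iff_exists.mp hve
  have hdom_nbr : ∀ x, G.Adj u x → x = v ∨ G.Adj v x := fun x hx =>
    (hdom (Or.inl hx)).symm
  have hcard : (insert s(v, u) (M \ {s(v, w)})).ncard = M.ncard := Set.ncard_exchange hvuM he
  exact ⟨_, hM.exchange he hadj hdom_nbr, fun M'' hM'' => hcard ▸ hmax M'' hM'', Set.mem_insert _ _⟩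

theorem stmt5 [Fintype V] (G : SimpleGraph V) (v u : V) (hadj : G.Adj v u)
    -- v dominates u: N[u] ⊆ N[v]
    (hdom : (G.neighborSet u ∪ {u}) ⊆ (G.neighborSet v ∪ {v}))
    (M : Set (Sym2 V)) (hM : IsIndMatching G M)
    (hmax : ∀ M', IsIndMatching G M' → M'.ncard ≤ M.ncard)
    (hv : v ∈ imSupp M) :
    ∃ M', IsIndMatching G M' ∧ (∀ M'', IsIndMatching G M'' → M''.ncard ≤ M'.ncard) ∧
      s(v, u) ∈ M' :=
  stmt5_general G v u hadj hdom M hM hmax hv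
end

section
/- Let v be a vertex of a graph G, and let S be an AIM-deletion set of G with v ∉ S. Then there is a neighbor u of v with u ∉ S and N({v,u}) ⊆ S; hence for every graph G, G has an AIM-deletion set of size ≤ k if and only if either G − v has an AIM-deletion set of size ≤ k − 1, or for some neighbor u of v, G − N[{v,u}] has an AIM-deletion set of size ≤ k − |N({v,u})|. -/
variable {V : Type*}

/-- Open neighborhood `N({v,u})` of the pair `{v,u}`. -/
def pairNbhd (G : SimpleGraph V) (v u : V) : Set V :=
  {w | w ≠ v ∧ w ≠ u ∧ (G.Adj v w ∨ G.Adj u w)}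

lemma part1 (G : SimpleGraph V) (v : V) (S : Set V) (hS : IsAIMDel G S) (hv : v ∉ S) :
    ∃ u, G.Adj v u ∧ u ∉ S ∧ pairNbhd G v u ⊆ S := by
  obtain ⟨u, ⟨huS, hadj⟩, huniq⟩ := hS v hv
  refine ⟨u, hadj, huS, ?_⟩
  rintro w ⟨hwv, hwu, hw⟩
  by_contra hwS
  cases hw with
  | inl h => exact hwu (huniq w ⟨hwS, h⟩)
  | inr h =>
    obtain ⟨x, hx, hxuniq⟩ := hS u huS
    have h1 : v = x := hxuniq v ⟨hv, hadj.symm⟩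
    have h2 : w = x := hxuniq w ⟨hwS, h⟩
    exact hwv (h2.trans h1.symm)

lemma aim_union (G : SimpleGraph V) (v u : V) (S : Set V) (hS : IsAIMDel G S)
    (hv : v ∉ S) (hu : u ∉ S) (hadj : G.Adj v u) (hP : pairNbhd G v u ⊆ S) :
    IsAIMDel G (S ∪ {v, u}) := by
  intro w hw
  simp only [Set.mem_union, Set.mem_insert_iff, Set.mem_singleton_iff, not_or] at hw
  obtain ⟨hwS, hwv, hwu⟩ := hw
  obtain ⟨x, ⟨hxS, hxadj⟩, hxuniq⟩ := hS w hwS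
  have hxv : x ≠ v := by
    rintro rfl
    exact hwS (hP ⟨hwv, hwu, Or.inl hxadj.symm⟩)
  have hxu : x ≠ u := by
    rintro rfl
    exact hwS (hP ⟨hwv, hwu, Or.inr hxadj.symm⟩)
  refine ⟨x, ⟨?_, hxadj⟩, ?_⟩
  · simp only [Set.mem_union, Set.mem_insert_iff, Set.mem_singleton_iff, not_or]
    exact ⟨hxS, hxv, hxu⟩
  · rintro y ⟨hy, hyadj⟩
    simp only [Set.mem_union, Set.mem_insert_iff, Set.mem_singleton_iff, not_or] at hy
    exact hxuniq y ⟨hy.1, hyadj⟩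

lemma aim_back (G : SimpleGraph V) (v u : V) (T : Set V) (hadj : G.Adj v u)
    (hT : Disjoint T (pairNbhd G v u ∪ {v, u}))
    (hS : IsAIMDel G ((pairNbhd G v u ∪ {v, u}) ∪ T)) :
    IsAIMDel G (pairNbhd G v u ∪ T) := by
  have hvT : v ∉ T := fun h => (hT.ne_of_mem h (by simp : v ∈ _)) rfl
  have huT : u ∉ T := fun h => (hT.ne_of_mem h (by simp : u ∈ _)) rfl
  have hvP : v ∉ pairNbhd G v u := fun h => h.1 rfl
  have huP : u ∉ pairNbhd G v u := fun h => h.2.1 rfl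
  intro w hw
  simp only [Set.mem_union, not_or] at hw
  obtain ⟨hwP, hwT⟩ := hw
  by_cases hwv : w = v
  · subst hwv
    refine ⟨u, ⟨by simp [huP, huT], hadj⟩, ?_⟩
    rintro y ⟨hy, hyadj⟩
    simp only [Set.mem_union, not_or] at hy
    by_contra hyu
    exact hy.1 ⟨hyadj.ne', hyu, Or.inl hyadj⟩
  by_cases hwu : w = u
  · subst hwu
    refine ⟨v, ⟨by simp [hvP, hvT], hadj.symm⟩, ?_⟩
    rintro y ⟨hy, hyadj⟩
    simp only [Set.mem_union, not_or] at hy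
    by_contra hyv
    exact hy.1 ⟨hyv, hyadj.ne', Or.inr hyadj⟩
  · have hw' : w ∉ (pairNbhd G v u ∪ {v, u}) ∪ T := by
      simp only [Set.mem_union, Set.mem_insert_iff, Set.mem_singleton_iff, not_or]
      exact ⟨⟨hwP, hwv, hwu⟩, hwT⟩
    obtain ⟨x, ⟨hxS, hxadj⟩, hxuniq⟩ := hS w hw'
    simp only [Set.mem_union, Set.mem_insert_iff, Set.mem_singleton_iff, not_or] at hxS
    refine ⟨x, ⟨by simp [hxS.1.1, hxS.2], hxadj⟩, ?_⟩
    rintro y ⟨hy, hyadj⟩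
    simp only [Set.mem_union, not_or] at hy
    have hyv : y ≠ v := by
      rintro rfl
      exact hwP ⟨hwv, hwu, Or.inl hyadj.symm⟩
    have hyu : y ≠ u := by
      rintro rfl
      exact hwP ⟨hwv, hwu, Or.inr hyadj.symm⟩
    refine hxuniq y ⟨?_, hyadj⟩
    simp only [Set.mem_union, Set.mem_insert_iff, Set.mem_singleton_iff, not_or]
    exact ⟨⟨hy.1, hyv, hyu⟩, hy.2⟩

theorem stmt6 [Fintype V] (G : SimpleGraph V) (v : V) (k : ℤ) :
    -- first part: any AIM-deletion set avoiding v keeps an edge at v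
    (∀ S : Set V, IsAIMDel G S → v ∉ S →
      ∃ u, G.Adj v u ∧ u ∉ S ∧ pairNbhd G v u ⊆ S) ∧
    -- second part: the branching rule is correct
    ((∃ S : Set V, (S.ncard : ℤ) ≤ k ∧ IsAIMDel G S) ↔
      ((∃ T : Set V, Disjoint T {v} ∧ (T.ncard : ℤ) ≤ k - 1 ∧ IsAIMDel G ({v} ∪ T)) ∨
       (∃ u, G.Adj v u ∧ ∃ T : Set V,
          Disjoint T (pairNbhd G v u ∪ {v, u}) ∧
          (T.ncard : ℤ) ≤ k - (pairNbhd G v u).ncard ∧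
          IsAIMDel G ((pairNbhd G v u ∪ {v, u}) ∪ T)))) := by
  refine ⟨part1 G v, ?_⟩
  constructor
  · rintro ⟨S, hSk, hS⟩
    by_cases hv : v ∈ S
    · left
      refine ⟨S \ {v}, Set.disjoint_sdiff_left, ?_, ?_⟩
      · have h1 : (S \ {v}).ncard + 1 = S.ncard :=
          Set.ncard_diff_singleton_add_one hv S.toFinite
        omega
      · have : {v} ∪ (S \ {v}) = S := by
          rw [Set.singleton_union, Set.insert_diff_singleton, Set.insert_eq_self.mpr hv]
        rw [this]; exact hS
    · right
      obtain ⟨u, hadj, hu, hP⟩ := part1 G v S hS hv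
      refine ⟨u, hadj, S \ pairNbhd G v u, ?_, ?_, ?_⟩
      · rw [Set.disjoint_union_right]
        refine ⟨Set.disjoint_sdiff_left, ?_⟩
        rw [Set.disjoint_iff_forall_ne]
        rintro a ⟨haS, _⟩ b hb rfl
        simp only [Set.mem_insert_iff, Set.mem_singleton_iff] at hb
        rcases hb with rfl | rfl
        · exact hv haS
        · exact hu haS
      · have h1 : (S \ pairNbhd G v u).ncard = S.ncard - (pairNbhd G v u).ncard :=
          Set.ncard_diff hP (Set.toFinite _)
        have h2 : (pairNbhd G v u).ncard ≤ S.ncard := Set.ncard_le_ncard hP S.toFinite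
        omega
      · have heq : (pairNbhd G v u ∪ {v, u}) ∪ (S \ pairNbhd G v u) = S ∪ {v, u} := by
          ext x
          simp only [Set.mem_union, Set.mem_diff, Set.mem_insert_iff, Set.mem_singleton_iff]
          have hx := @hP x
          tauto
        rw [heq]
        exact aim_union G v u S hS hv hu hadj hP
  · rintro (⟨T, hdisj, hTk, hT⟩ | ⟨u, hadj, T, hdisj, hTk, hT⟩)
    · refine ⟨{v} ∪ T, ?_, hT⟩
      have h1 : ({v} ∪ T).ncard ≤ ({v} : Set V).ncard + T.ncard := Set.ncard_union_le _ _
      have h2 : ({v} : Set V).ncard = 1 := Set.ncard_singleton v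
      omega
    · refine ⟨pairNbhd G v u ∪ T, ?_, aim_back G v u T hadj hdisj hT⟩
      have h1 : (pairNbhd G v u ∪ T).ncard ≤ (pairNbhd G v u).ncard + T.ncard :=
        Set.ncard_union_le _ _
      omega
end

section
/- Let G be a graph and v a degree-1 vertex with a neighbor u of degree 2. Then G has an AIM-deletion set of size ≤ k if and only if G − N[{v,u}] has an AIM-deletion set of size ≤ k − 1. -/
variable {V : Type*}

theorem stmt7 [Fintype V] (G : SimpleGraph V) (v u : V) (hadj : G.Adj v u)
    (hdv : (G.neighborSet v).ncard = 1) (hdu : (G.neighborSet u).ncard = 2)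
    (k : ℤ) :
    (∃ S : Set V, (S.ncard : ℤ) ≤ k ∧ IsAIMDel G S) ↔
      (∃ T : Set V, Disjoint T (pairNbhd G v u ∪ {v, u}) ∧
        (T.ncard : ℤ) ≤ k - 1 ∧ IsAIMDel G ((pairNbhd G v u ∪ {v, u}) ∪ T)) := by
  classical
  have hvu : v ≠ u := G.ne_of_adj hadj
  -- N(v) = {u}
  have hvnbr : ∀ x, G.Adj v x → x = u := by
    obtain ⟨a, ha⟩ := Set.ncard_eq_one.mp hdv
    have hu : u ∈ G.neighborSet v := hadj
    rw [ha] at hu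
    intro x hx
    have hx' : x ∈ G.neighborSet v := hx
    rw [ha] at hx'
    simp only [Set.mem_singleton_iff] at hu hx'
    rw [hx', ← hu]
  -- the other neighbor `w` of `u`
  have hwex : ∃ w, G.Adj u w ∧ w ≠ v ∧ ∀ x, G.Adj u x → x = v ∨ x = w := by
    obtain ⟨a, b, hab, hNu⟩ := Set.ncard_eq_two.mp hdu
    have hmem : ∀ x, G.Adj u x ↔ x = a ∨ x = b := by
      intro x
      constructor
      · intro hx
        have : x ∈ G.neighborSet u := hx
        rw [hNu] at this
        exact this
      · intro hx
        have : x ∈ G.neighborSet u := by rw [hNu]; exact hx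
        exact this
    rcases (hmem v).mp hadj.symm with h | h
    · subst h
      exact ⟨b, (hmem b).mpr (Or.inr rfl), Ne.symm hab, fun x hx => (hmem x).mp hx⟩
    · subst h
      exact ⟨a, (hmem a).mpr (Or.inl rfl), hab, fun x hx => ((hmem x).mp hx).symm⟩
  obtain ⟨w, huw, hwv, hunbr⟩ := hwex
  have hwu : w ≠ u := (G.ne_of_adj huw).symm
  have hP : pairNbhd G v u ∪ {v, u} = ({w, v, u} : Set V) := by
    ext x
    simp only [pairNbhd, Set.mem_union, Set.mem_setOf_eq, Set.mem_insert_iff,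
      Set.mem_singleton_iff]
    constructor
    · rintro (⟨hxv, hxu, hx | hx⟩ | h)
      · exact absurd (hvnbr x hx) hxu
      · rcases hunbr x hx with h | h
        · exact absurd h hxv
        · exact Or.inl h
      · tauto
    · rintro (rfl | rfl | rfl)
      · exact Or.inl ⟨hwv, hwu, Or.inr huw⟩
      · exact Or.inr (Or.inl rfl)
      · exact Or.inr (Or.inr rfl)
  rw [hP]
  constructor
  · -- forward direction
    rintro ⟨S, hScard, hSaim⟩
    have huv : u ∈ S → v ∈ S := by
      intro hu
      by_contra hv
      obtain ⟨y, ⟨hy, hvy⟩, _⟩ := hSaim v hv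
      rw [hvnbr y hvy] at hy
      exact hy hu
    by_cases hcase : u ∈ S ∧ w ∉ S
    · obtain ⟨huS, hwS⟩ := hcase
      have hvS : v ∈ S := huv huS
      obtain ⟨z, ⟨hzS, hwz⟩, hzuniq⟩ := hSaim w hwS
      have hzw : z ≠ w := (G.ne_of_adj hwz).symm
      have hzv : z ≠ v := fun h => hzS (h ▸ hvS)
      have hzu : z ≠ u := fun h => hzS (h ▸ huS)
      refine ⟨insert z S \ {w, v, u}, Set.disjoint_sdiff_left, ?_, ?_⟩
      · -- cardinality
        have huT : u ∉ insert z S \ ({w, v, u} : Set V) := fun h => h.2 (by simp)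
        have hvT : v ∉ insert u (insert z S \ ({w, v, u} : Set V)) := by
          simp only [Set.mem_insert_iff, not_or]
          exact ⟨hvu, fun h => h.2 (by simp)⟩
        have hsub : insert v (insert u (insert z S \ ({w, v, u} : Set V))) ⊆ insert z S := by
          intro x hx
          simp only [Set.mem_insert_iff] at hx ⊢
          rcases hx with rfl | rfl | hx
          · exact Or.inr hvS
          · exact Or.inr huS
          · exact hx.1
        have hc1 : (insert z S \ ({w, v, u} : Set V)).ncard + 2 ≤ S.ncard + 1 := by
          have e1 : (insert v (insert u (insert z S \ ({w, v, u} : Set V)))).ncard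
              = (insert z S \ ({w, v, u} : Set V)).ncard + 2 := by
            rw [Set.ncard_insert_of_notMem hvT, Set.ncard_insert_of_notMem huT]
          have e2 : (insert v (insert u (insert z S \ ({w, v, u} : Set V)))).ncard
              ≤ (insert z S).ncard := Set.ncard_le_ncard hsub (Set.toFinite _)
          have e3 : (insert z S).ncard ≤ S.ncard + 1 := Set.ncard_insert_le z S
          omega
        have := hScard
        have hc2 : ((insert z S \ ({w, v, u} : Set V)).ncard : ℤ) + 2 ≤ (S.ncard : ℤ) + 1 := by
          exact_mod_cast hc1
        linarith
      · -- AIM property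
        have heq : ({w, v, u} : Set V) ∪ (insert z S \ {w, v, u}) = {w, v, u} ∪ insert z S :=
          Set.union_diff_self
        rw [heq]
        intro x hx
        simp only [Set.mem_union, Set.mem_insert_iff, Set.mem_singleton_iff, not_or] at hx
        obtain ⟨⟨hxw, hxv, hxu⟩, hxz, hxS⟩ := hx
        obtain ⟨y, ⟨hyS, hxy⟩, hyuniq⟩ := hSaim x hxS
        have hyw : y ≠ w := by
          rintro rfl
          exact hxz (hzuniq x ⟨hxS, hxy.symm⟩)
        have hyz : y ≠ z := by
          rintro rfl
          obtain ⟨p, _, hpuniq⟩ := hSaim y hzS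
          have h1 := hpuniq x ⟨hxS, hxy.symm⟩
          have h2 := hpuniq w ⟨hwS, hwz.symm⟩
          exact hxw (h1.trans h2.symm)
        have hyv : y ≠ v := fun h => hyS (h ▸ hvS)
        have hyu : y ≠ u := fun h => hyS (h ▸ huS)
        refine ⟨y, ⟨?_, hxy⟩, ?_⟩
        · simp only [Set.mem_union, Set.mem_insert_iff, Set.mem_singleton_iff, not_or]
          exact ⟨⟨hyw, hyv, hyu⟩, hyz, hyS⟩
        · rintro y' ⟨hy', hxy'⟩
          simp only [Set.mem_union, Set.mem_insert_iff, Set.mem_singleton_iff, not_or] at hy'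
          exact hyuniq y' ⟨hy'.2.2, hxy'⟩
    · -- second case: T = S \ {w, v, u}
      have he : ∃ e, e ∈ S ∧ e ∈ ({w, v, u} : Set V) := by
        by_cases hv : v ∈ S
        · exact ⟨v, hv, by simp⟩
        · by_cases hw' : w ∈ S
          · exact ⟨w, hw', by simp⟩
          · exfalso
            have hu : u ∉ S := fun hu => hv (huv hu)
            obtain ⟨y, _, hyuniq⟩ := hSaim u hu
            have h1 := hyuniq v ⟨hv, hadj.symm⟩
            have h2 := hyuniq w ⟨hw', huw⟩
            exact hwv (h2.trans h1.symm)
      obtain ⟨e, heS, heP⟩ := he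
      refine ⟨S \ {w, v, u}, Set.disjoint_sdiff_left, ?_, ?_⟩
      · have heT : e ∉ S \ ({w, v, u} : Set V) := fun h => h.2 heP
        have hsub : insert e (S \ ({w, v, u} : Set V)) ⊆ S := by
          intro x hx
          simp only [Set.mem_insert_iff] at hx
          rcases hx with rfl | hx
          · exact heS
          · exact hx.1
        have hc1 : (S \ ({w, v, u} : Set V)).ncard + 1 ≤ S.ncard := by
          rw [← Set.ncard_insert_of_notMem heT]
          exact Set.ncard_le_ncard hsub (Set.toFinite _)
        have hc2 : ((S \ ({w, v, u} : Set V)).ncard : ℤ) + 1 ≤ (S.ncard : ℤ) := by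
          exact_mod_cast hc1
        linarith
      · have heq : ({w, v, u} : Set V) ∪ (S \ {w, v, u}) = {w, v, u} ∪ S :=
          Set.union_diff_self
        rw [heq]
        intro x hx
        simp only [Set.mem_union, Set.mem_insert_iff, Set.mem_singleton_iff, not_or] at hx
        obtain ⟨⟨hxw, hxv, hxu⟩, hxS⟩ := hx
        obtain ⟨y, ⟨hyS, hxy⟩, hyuniq⟩ := hSaim x hxS
        have hyw : y ≠ w := by
          rintro rfl
          have huS : u ∉ S := fun hu => hcase ⟨hu, hyS⟩
          obtain ⟨p, _, hpuniq⟩ := hSaim y hyS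
          have h1 := hpuniq x ⟨hxS, hxy.symm⟩
          have h2 := hpuniq u ⟨huS, huw.symm⟩
          exact hxu (h1.trans h2.symm)
        have hyv : y ≠ v := by
          rintro rfl
          exact hxu (hvnbr x hxy.symm)
        have hyu : y ≠ u := by
          rintro rfl
          rcases hunbr x hxy.symm with rfl | rfl
          · exact hxv rfl
          · exact hxw rfl
        refine ⟨y, ⟨?_, hxy⟩, ?_⟩
        · simp only [Set.mem_union, Set.mem_insert_iff, Set.mem_singleton_iff, not_or]
          exact ⟨⟨hyw, hyv, hyu⟩, hyS⟩
        · rintro y' ⟨hy', hxy'⟩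
          simp only [Set.mem_union, Set.mem_insert_iff, Set.mem_singleton_iff, not_or] at hy'
          exact hyuniq y' ⟨hy'.2, hxy'⟩
  · -- reverse direction
    rintro ⟨T, hdisj, hTcard, hTaim⟩
    have hwT : w ∉ T := fun h => Set.disjoint_left.mp hdisj h (by simp)
    have hvT : v ∉ T := fun h => Set.disjoint_left.mp hdisj h (by simp)
    have huT : u ∉ T := fun h => Set.disjoint_left.mp hdisj h (by simp)
    refine ⟨insert w T, ?_, ?_⟩
    · have h1 : (insert w T).ncard ≤ T.ncard + 1 := Set.ncard_insert_le w T
      have h2 : ((insert w T).ncard : ℤ) ≤ (T.ncard : ℤ) + 1 := by exact_mod_cast h1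
      linarith
    · intro x hx
      simp only [Set.mem_insert_iff, not_or] at hx
      obtain ⟨hxw, hxT⟩ := hx
      by_cases hxv : x = v
      · subst hxv
        refine ⟨u, ⟨?_, hadj⟩, ?_⟩
        · simp only [Set.mem_insert_iff, not_or]
          exact ⟨Ne.symm hwu, huT⟩
        · rintro y ⟨_, hvy⟩
          exact hvnbr y hvy
      · by_cases hxu : x = u
        · subst hxu
          refine ⟨v, ⟨?_, hadj.symm⟩, ?_⟩
          · simp only [Set.mem_insert_iff, not_or]
            exact ⟨Ne.symm hwv, hvT⟩
          · rintro y ⟨hy, huy⟩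
            rcases hunbr y huy with rfl | rfl
            · rfl
            · exact absurd (Set.mem_insert _ _) hy
        · have hxP : x ∉ ({w, v, u} : Set V) ∪ T := by
            simp only [Set.mem_union, Set.mem_insert_iff, Set.mem_singleton_iff, not_or]
            exact ⟨⟨hxw, hxv, hxu⟩, hxT⟩
          obtain ⟨y, ⟨hy, hxy⟩, hyuniq⟩ := hTaim x hxP
          simp only [Set.mem_union, Set.mem_insert_iff, Set.mem_singleton_iff, not_or] at hy
          obtain ⟨⟨hyw, hyv, hyu⟩, hyT⟩ := hy
          refine ⟨y, ⟨?_, hxy⟩, ?_⟩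
          · simp only [Set.mem_insert_iff, not_or]
            exact ⟨hyw, hyT⟩
          · rintro y' ⟨hy', hxy'⟩
            simp only [Set.mem_insert_iff, not_or] at hy'
            apply hyuniq
            refine ⟨?_, hxy'⟩
            simp only [Set.mem_union, Set.mem_insert_iff, Set.mem_singleton_iff, not_or]
            refine ⟨⟨hy'.1, ?_, ?_⟩, hy'.2⟩
            · rintro rfl
              exact hxu (hvnbr x hxy'.symm)
            · rintro rfl
              rcases hunbr x hxy'.symm with rfl | rfl
              · exact hxv rfl
              · exact hxw rfl
end

section
/- Let G be a graph in which every vertex has degree exactly 2 (a disjoint union of cycles), and let v be any vertex of G. Then for every integer k, G has an AIM-deletion set of size ≤ k if and only if G − v has an AIM-deletion set of size ≤ k − 1. -/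
variable {V : Type*}

/-!
Every connected component of a 2-regular finite graph is a cycle, and rotating that cycle while
fixing everything else is an automorphism. Automorphisms carry AIM-deletion sets to
AIM-deletion sets of the same size. If an AIM-deletion set `S` misses `v`, then `v` has a
neighbour `w ∈ S`, and pulling `S` back along the rotation taking `v` to `w` gives an
AIM-deletion set of the same size containing `v`; removing `v` from it gives the set for `G - v`.
-/

open Function Equiv.Perm

namespace SimpleGraph

variable {α : Type*} {G : SimpleGraph V}

theorem cycleGraph_adj_add_right {n : ℕ} {u v d : Fin (n + 1)} :
    (cycleGraph (n + 1)).Adj (u + d) (v + d) ↔ (cycleGraph (n + 1)).Adj u v := by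
  rw [cycleGraph_eq_circulantGraph]
  exact circulantGraph_adj_translate

/-- An automorphism of a union of components of `G`, extended by the identity. -/
theorem exists_iso_apply_embedding_eq {H : SimpleGraph α} (ι : α ↪ V) (hH : G.comap ι = H)
    (hι : ∀ a y, G.Adj (ι a) y → y ∈ Set.range ι) (σ : H ≃g H) :
    ∃ φ : G ≃g G, ∀ a, φ (ι a) = ι (σ a) := by
  subst hH
  set ψ := viaEmbedding σ.toEquiv ι
  have hψ (a : α) : ψ (ι a) = ι (σ a) := viaEmbedding_apply _ _ a
  have hψ_out {y : V} (hy : y ∉ Set.range ι) : ψ y = y := viaEmbedding_apply_of_notMem _ _ y hy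
  have hadj (a : α) (y : V) : G.Adj (ψ (ι a)) (ψ y) ↔ G.Adj (ι a) y := by
    by_cases hy : y ∈ Set.range ι
    · obtain ⟨b, rfl⟩ := hy
      rw [hψ, hψ]
      exact σ.map_adj_iff
    · rw [hψ, hψ_out hy]
      exact iff_of_false (fun h => hy (hι _ y h)) (fun h => hy (hι a y h))
  refine ⟨⟨ψ, fun {x y} => ?_⟩, hψ⟩
  by_cases hx : x ∈ Set.range ι
  · obtain ⟨a, rfl⟩ := hx
    exact hadj a y
  by_cases hy : y ∈ Set.range ι
  · obtain ⟨b, rfl⟩ := hy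
    simpa only [adj_comm] using hadj b x
  · simp only [hψ_out hx, hψ_out hy]

theorem Walk.IsCycle.exists_injective_adj_succ {v : V} {p : G.Walk v v} (hp : p.IsCycle) :
    ∃ n, ∃ f : Fin (n + 3) → V, Injective f ∧ f 0 = v ∧ ∀ i, G.Adj (f i) (f (i + 1)) := by
  obtain ⟨n, hn⟩ : ∃ n, p.length = n + 3 := ⟨p.length - 3, by have := hp.three_le_length; omega⟩
  have hsucc (i : Fin (n + 3)) : p.getVert ↑(i + 1) = p.getVert (i + 1) := by
    rw [Fin.val_add_one]
    split_ifs with h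
    · rw [h, Fin.val_last, p.getVert_zero, ← hn, p.getVert_length]
    · rfl
  refine ⟨n, fun i => p.getVert i, fun i j hij => Fin.ext (hp.getVert_injOn' ?_ ?_ hij),
    p.getVert_zero, fun i => ?_⟩
  · simp only [Set.mem_ofPred_eq]; omega
  · simp only [Set.mem_ofPred_eq]; omega
  · simp only [hsucc]
    exact p.adj_getVert_succ (by omega)

namespace IsCycles

section CyclicSequence

variable {n : ℕ} (hG : G.IsCycles) {f : Fin (n + 3) → V} (hf : Injective f)
  (hadj : ∀ i, G.Adj (f i) (f (i + 1)))
include hG hf hadj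

theorem neighborSet_eq_of_injective (i : Fin (n + 3)) :
    G.neighborSet (f i) = {f (i - 1), f (i + 1)} := by
  have hsub : {f (i - 1), f (i + 1)} ⊆ G.neighborSet (f i) := by
    refine Set.insert_subset ?_ (Set.singleton_subset_iff.mpr (hadj i))
    simpa using (hadj (i - 1)).symm
  have hne : i - 1 ≠ i + 1 := by
    rw [ne_eq, sub_eq_iff_eq_add, add_assoc, left_eq_add, Fin.ext_iff]
    simp [Fin.val_add, Nat.mod_eq_of_lt (show 2 < n + 3 by omega)]
  have hcard : (G.neighborSet (f i)).ncard = 2 := hG ⟨_, hadj i⟩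
  refine (Set.eq_of_subset_of_ncard_le hsub ?_ (Set.finite_of_ncard_ne_zero (by omega))).symm
  rw [hcard, Set.ncard_pair (hf.ne hne)]

theorem comap_eq_cycleGraph : G.comap f = cycleGraph (n + 3) := by
  ext i j
  rw [comap_adj, ← mem_neighborSet, ← mem_neighborSet, hG.neighborSet_eq_of_injective hf hadj,
    cycleGraph_neighborSet (n := n + 1)]
  simp only [Set.mem_insert_iff, Set.mem_singleton_iff, hf.eq_iff]

theorem adj_mem_range {i : Fin (n + 3)} {y : V} (h : G.Adj (f i) y) : y ∈ Set.range f := by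
  rw [← mem_neighborSet, hG.neighborSet_eq_of_injective hf hadj] at h
  rcases h with rfl | rfl <;> exact Set.mem_range_self _

end CyclicSequence

theorem exists_iso_apply_eq_of_adj [Finite V] (hG : G.IsCycles) {v w : V} (h : G.Adj v w) :
    ∃ φ : G ≃g G, φ v = w := by
  obtain ⟨p, hp, -⟩ :=
    hG.exists_cycle_toSubgraph_verts_eq_connectedComponentSupp ConnectedComponent.connectedComponentMk_mem ⟨w, h⟩
  obtain ⟨n, f, hf, rfl, hadj⟩ := hp.exists_injective_adj_succ
  obtain ⟨k, rfl⟩ := hG.adj_mem_range hf hadj h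
  let rotate : cycleGraph (n + 3) ≃g cycleGraph (n + 3) :=
    ⟨Equiv.addRight k, cycleGraph_adj_add_right⟩
  obtain ⟨φ, hφ⟩ := exists_iso_apply_embedding_eq ⟨f, hf⟩ (hG.comap_eq_cycleGraph hf hadj)
    (fun _ _ => hG.adj_mem_range hf hadj) rotate
  exact ⟨φ, (hφ 0).trans (congrArg f (zero_add k))⟩

end IsCycles

end SimpleGraph

open SimpleGraph

theorem IsAIMDel.preimage_iso {G : SimpleGraph V} {W : Type*} {H : SimpleGraph W} {S : Set W}
    (hS : IsAIMDel H S) (φ : G ≃g H) : IsAIMDel G (φ ⁻¹' S) := by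
  intro x hx
  obtain ⟨u, ⟨huS, hxu⟩, huniq⟩ := hS (φ x) hx
  refine ⟨φ.symm u, ⟨by simpa using huS, by simpa using φ.symm.map_adj_iff.mpr hxu⟩, ?_⟩
  rintro y ⟨hyS, hxy⟩
  rw [eq_comm, φ.symm_apply_eq]
  exact (huniq (φ y) ⟨hyS, φ.map_adj_iff.mpr hxy⟩).symm

theorem IsAIMDel.exists_mem_ncard_eq [Finite V] {G : SimpleGraph V} (hG : G.IsCycles) {S : Set V}
    (hS : IsAIMDel G S) (v : V) : ∃ S' : Set V, v ∈ S' ∧ S'.ncard = S.ncard ∧ IsAIMDel G S' := by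
  by_cases hv : v ∈ S
  · exact ⟨S, hv, rfl, hS⟩
  obtain ⟨u, ⟨-, hvu⟩, huniq⟩ := hS v hv
  obtain ⟨w, huw, hvw⟩ := hG.other_adj_of_adj hvu
  have hwS : w ∈ S := by
    by_contra hwS
    exact huw (huniq w ⟨hwS, hvw⟩).symm
  obtain ⟨φ, rfl⟩ := hG.exists_iso_apply_eq_of_adj hvw
  refine ⟨φ ⁻¹' S, hwS, ?_, hS.preimage_iso φ⟩
  exact Set.ncard_preimage_of_injective_subset_range φ.injective (by simp [φ.surjective.range_eq])

theorem stmt8 [Fintype V] (G : SimpleGraph V)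
    (hreg : ∀ w : V, (G.neighborSet w).ncard = 2) (v : V) (k : ℤ) :
    (∃ S : Set V, (S.ncard : ℤ) ≤ k ∧ IsAIMDel G S) ↔
      (∃ T : Set V, Disjoint T {v} ∧ (T.ncard : ℤ) ≤ k - 1 ∧
        IsAIMDel G ({v} ∪ T)) := by
  have hG : G.IsCycles := fun w _ => hreg w
  constructor
  · rintro ⟨S, hSk, hS⟩
    obtain ⟨S', hvS', hcard, hS'⟩ := hS.exists_mem_ncard_eq hG v
    refine ⟨S' \ {v}, Set.disjoint_sdiff_left, ?_, ?_⟩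
    · have := Set.ncard_sdiff_singleton_add_one hvS'
      omega
    · rwa [Set.union_sdiff_self, Set.union_eq_self_of_subset_left (Set.singleton_subset_iff.mpr hvS')]
  · rintro ⟨T, hTv, hTk, hT⟩
    refine ⟨{v} ∪ T, ?_, hT⟩
    rw [Set.ncard_union_eq hTv.symm, Set.ncard_singleton]
    omega
end

section
/- The unique real root x > 1 of the equation 1 = x^{-1} + 5·x^{-5} satisfies x < 1.6596. -/
theorem stmt12 (x : ℝ) (hx : 1 < x) (hroot : 1 = x⁻¹ + 5 / x ^ 5) :
    x < 1.6596 := by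
  by_contra h
  push_neg at h
  have hx0 : (0:ℝ) < x := by linarith
  have key : x ^ 5 = x ^ 4 + 5 := by
    have h5 : x ^ 5 ≠ 0 := by positivity
    field_simp at hroot
    nlinarith [hroot]
  have h4 : (1.6596:ℝ) ^ 4 ≤ x ^ 4 := pow_le_pow_left₀ (by norm_num) h 4
  have key2 : x ^ 4 * (x - 1) = 5 := by ring_nf; nlinarith [key]
  nlinarith [mul_le_mul h4 (by linarith : (0.6596:ℝ) ≤ x - 1) (by norm_num) (by positivity : (0:ℝ) ≤ x ^ 4)]
end

section
/- Let G be a bipartite graph with parts A' and B' where |A'| > |B'|. Then there exist nonempty C' ⊆ A' and H' ⊆ B' such that no vertex of C' has a neighbor outside H', and there is a matching in G saturating H' whose edges all go from H' into C'. -/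
variable {V : Type*}

theorem stmt16 [Fintype V] (G : SimpleGraph V) (A' B' : Set V)
    -- (A', B') is a bipartition of G
    (hpart : A' ∪ B' = Set.univ) (hdisj : Disjoint A' B')
    (hbip : ∀ a b : V, G.Adj a b → (a ∈ A' ∧ b ∈ B') ∨ (a ∈ B' ∧ b ∈ A'))
    (hcard : B'.ncard < A'.ncard) :
    ∃ C' H' : Set V, C'.Nonempty ∧ C' ⊆ A' ∧ H' ⊆ B' ∧
      -- no vertex of C' has a neighbor outside H'
      (∀ c ∈ C', ∀ w : V, G.Adj c w → w ∈ H') ∧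
      -- a matching saturating H' whose edges go from H' into C'
      (∃ M : V → V, Set.InjOn M H' ∧ ∀ h ∈ H', M h ∈ C' ∧ G.Adj h (M h)) := by
  classical
  -- neighborhood operator
  set N : Set V → Set V := fun S => {w | ∃ c ∈ S, G.Adj c w} with hNdef
  have hNB : ∀ C : Set V, C ⊆ A' → N C ⊆ B' := by
    intro C hC w hw
    obtain ⟨c, hc, hadj⟩ := hw
    rcases hbip c w hadj with ⟨_, hwB⟩ | ⟨hcB, _⟩
    · exact hwB
    · exact absurd hcB (Set.disjoint_left.mp hdisj (hC hc))
  -- the family of "violating" sets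
  set P : Set (Set V) := {C | C.Nonempty ∧ C ⊆ A' ∧ (N C).ncard < C.ncard} with hPdef
  have hA'P : A' ∈ P := by
    refine ⟨?_, subset_rfl, ?_⟩
    · rw [Set.nonempty_iff_ne_empty]
      intro h
      simp [h] at hcard
    · exact lt_of_le_of_lt (Set.ncard_le_ncard (hNB A' subset_rfl) (Set.toFinite _)) hcard
  -- pick a violating set of minimal cardinality
  set K : Set ℕ := Set.ncard '' P with hKdef
  have hKne : K.Nonempty := ⟨A'.ncard, A', hA'P, rfl⟩
  obtain ⟨C', hC'P, hC'card⟩ := Nat.sInf_mem hKne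
  have hmin : ∀ D ∈ P, sInf K ≤ D.ncard := fun D hD => Nat.sInf_le ⟨D, hD, rfl⟩
  obtain ⟨hC'ne, hC'A, hHC⟩ := hC'P
  set H' : Set V := N C' with hH'def
  have hH'B : H' ⊆ B' := hNB C' hC'A
  -- Hall condition for matching H' into C'
  have key : ∀ S : Set V, S ⊆ H' → S.ncard ≤ (N S ∩ C').ncard := by
    intro S hS
    by_contra hcon
    push_neg at hcon
    have hSne : S.Nonempty := by
      rw [Set.nonempty_iff_ne_empty]
      intro h
      subst h
      simp at hcon
    set C'' : Set V := C' \ N S with hC''def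
    -- N C'' ⊆ H' \ S
    have hsub : N C'' ⊆ H' \ S := by
      intro w hw
      obtain ⟨c, hc, hadj⟩ := hw
      refine ⟨⟨c, hc.1, hadj⟩, ?_⟩
      intro hwS
      exact hc.2 ⟨w, hwS, hadj.symm⟩
    -- cardinality facts
    have ha : C'.ncard ≤ C''.ncard + (N S ∩ C').ncard := by
      have : C' ⊆ C'' ∪ (N S ∩ C') := by
        intro c hc
        by_cases h : c ∈ N S
        · exact Or.inr ⟨h, hc⟩
        · exact Or.inl ⟨hc, h⟩
      exact le_trans (Set.ncard_le_ncard this (Set.toFinite _)) (Set.ncard_union_le _ _)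
    have hb : (N C'').ncard + S.ncard ≤ H'.ncard := by
      have hdisj2 : Disjoint (N C'') S := by
        rw [Set.disjoint_left]
        intro x hx hxS
        exact (hsub hx).2 hxS
      have hu : N C'' ∪ S ⊆ H' := by
        intro x hx
        rcases hx with hx | hx
        · exact (hsub hx).1
        · exact hS hx
      calc (N C'').ncard + S.ncard = (N C'' ∪ S).ncard := by
            rw [Set.ncard_union_eq hdisj2 (Set.toFinite _) (Set.toFinite _)]
        _ ≤ H'.ncard := Set.ncard_le_ncard hu (Set.toFinite _)
    have he : S.ncard ≤ H'.ncard := Set.ncard_le_ncard hS (Set.toFinite _)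
    have hNC'' : (N C'').ncard < C''.ncard ∧ 0 < C''.ncard := by
      constructor <;> omega
    -- C'' is a smaller violating set
    have hC''ne : C''.Nonempty := by
      rw [← Set.ncard_pos (Set.toFinite _)]
      exact hNC''.2
    have hC''P : C'' ∈ P := ⟨hC''ne, fun x hx => hC'A hx.1, hNC''.1⟩
    have hlt : C''.ncard < C'.ncard := by
      obtain ⟨s, hsS⟩ := hSne
      obtain ⟨c, hcC, hadj⟩ := hS hsS
      have hcNS : c ∈ N S := ⟨s, hsS, hadj.symm⟩
      refine Set.ncard_lt_ncard ⟨fun x hx => hx.1, ?_⟩ (Set.toFinite _)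
      intro habs
      exact (habs hcC).2 hcNS
    have := hmin C'' hC''P
    omega
  -- apply Hall's marriage theorem
  set t : ↥H' → Finset V := fun h =>
    (Set.toFinite {c | c ∈ C' ∧ G.Adj (↑h) c}).toFinset with htdef
  have hall : ∀ s : Finset ↥H', s.card ≤ (s.biUnion t).card := by
    intro s
    set S : Set V := Subtype.val '' (↑s : Set ↥H') with hSdef
    have hSsub : S ⊆ H' := by
      rintro x ⟨⟨y, hy⟩, _, rfl⟩
      exact hy
    have hcard1 : S.ncard = s.card := by
      rw [hSdef, Set.ncard_image_of_injective _ Subtype.val_injective,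
        Set.ncard_coe_finset]
    have hsub2 : N S ∩ C' ⊆ ↑(s.biUnion t) := by
      rintro x ⟨⟨c, hc, hadj⟩, hxC⟩
      obtain ⟨h, hhs, rfl⟩ := hc
      simp only [Finset.coe_biUnion, Set.mem_iUnion]
      exact ⟨h, hhs, by simp [htdef, hxC, hadj]⟩
    calc s.card = S.ncard := hcard1.symm
      _ ≤ (N S ∩ C').ncard := key S hSsub
      _ ≤ (↑(s.biUnion t) : Set V).ncard :=
          Set.ncard_le_ncard hsub2 (Set.toFinite _)
      _ = (s.biUnion t).card := Set.ncard_coe_finset _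
  obtain ⟨f, hfinj, hft⟩ :=
    (Finset.all_card_le_biUnion_card_iff_exists_injective t).mp hall
  have hft' : ∀ h : ↥H', f h ∈ C' ∧ G.Adj (↑h) (f h) := by
    intro h
    have := hft h
    rw [htdef, Set.Finite.mem_toFinset] at this
    exact this
  refine ⟨C', H', hC'ne, hC'A, hH'B, ?_, ?_⟩
  · intro c hc w hadj
    exact ⟨c, hc, hadj⟩
  · refine ⟨fun v => if hv : v ∈ H' then f ⟨v, hv⟩ else v, ?_, ?_⟩
    · intro x hx y hy hxy
      simp only [dif_pos hx, dif_pos hy] at hxy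
      have := hfinj hxy
      exact congrArg Subtype.val this
    · intro h hh
      simp only [dif_pos hh]
      exact hft' ⟨h, hh⟩
end

section
/- If S is an AIM-deletion set of a graph G and C is a connected component of G that is a single edge (two vertices each of degree 1 in G), then S \ V(C) is an AIM-deletion set of G − V(C); conversely, any AIM-deletion set of G − V(C) is an AIM-deletion set of G. Hence G has an AIM-deletion set of size ≤ k iff G − V(C) does. -/
variable {V : Type*}

theorem stmt17 [Fintype V] (G : SimpleGraph V) (x y : V) (hadj : G.Adj x y)
    (hdx : (G.neighborSet x).ncard = 1) (hdy : (G.neighborSet y).ncard = 1)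
    (k : ℕ) :
    -- S \ V(C) is an AIM-deletion set of G − V(C)
    (∀ S : Set V, IsAIMDel G S → IsAIMDel G (({x, y} : Set V) ∪ (S \ {x, y}))) ∧
    -- conversely, any AIM-deletion set of G − V(C) is an AIM-deletion set of G
    (∀ T : Set V, Disjoint T {x, y} → IsAIMDel G (({x, y} : Set V) ∪ T) →
      IsAIMDel G T) ∧
    -- hence the reduction is safe
    ((∃ S : Set V, S.ncard ≤ k ∧ IsAIMDel G S) ↔
      (∃ T : Set V, Disjoint T {x, y} ∧ T.ncard ≤ k ∧
        IsAIMDel G (({x, y} : Set V) ∪ T))) := by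
  have hnx : G.neighborSet x = {y} := by
    obtain ⟨a, ha⟩ := Set.ncard_eq_one.mp hdx
    have : y ∈ G.neighborSet x := hadj
    rw [ha] at this; rw [ha, this]
  have hny : G.neighborSet y = {x} := by
    obtain ⟨a, ha⟩ := Set.ncard_eq_one.mp hdy
    have : x ∈ G.neighborSet y := hadj.symm
    rw [ha] at this; rw [ha, this]
  -- adjacency to x or y forces being y or x
  have hax : ∀ v, G.Adj v x → v = y := by
    intro v hv
    have : v ∈ G.neighborSet x := hv.symm
    rwa [hnx, Set.mem_singleton_iff] at this
  have hay : ∀ v, G.Adj v y → v = x := by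
    intro v hv
    have : v ∈ G.neighborSet y := hv.symm
    rwa [hny, Set.mem_singleton_iff] at this
  have part1 : ∀ S : Set V, IsAIMDel G S →
      IsAIMDel G (({x, y} : Set V) ∪ (S \ {x, y})) := by
    intro S hS v hv
    simp only [Set.mem_union, Set.mem_diff, not_or, not_and, not_not] at hv
    obtain ⟨hvxy, hvS⟩ := hv
    have hvS' : v ∉ S := fun h => hvxy (hvS h)
    obtain ⟨u, ⟨huS, huadj⟩, huniq⟩ := hS v hvS'
    have huxy : u ∉ ({x, y} : Set V) := by
      intro hu
      simp only [Set.mem_insert_iff, Set.mem_singleton_iff] at hu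
      rcases hu with h | h
      · rw [h] at huadj; exact hvxy (Or.inr (hax v huadj))
      · rw [h] at huadj; exact hvxy (Or.inl (hay v huadj))
    refine ⟨u, ⟨?_, huadj⟩, ?_⟩
    · simp only [Set.mem_union, Set.mem_diff, not_or, not_and, not_not]
      exact ⟨fun h => huxy h, fun h => absurd huS (not_not.mpr h)⟩
    · intro u' ⟨hu', hadj'⟩
      simp only [Set.mem_union, Set.mem_diff, not_or, not_and, not_not] at hu'
      have : u' ∉ S := fun h => hu'.1 (hu'.2 h)
      exact huniq u' ⟨this, hadj'⟩
  have part2 : ∀ T : Set V, Disjoint T {x, y} → IsAIMDel G (({x, y} : Set V) ∪ T) →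
      IsAIMDel G T := by
    intro T hdisj hT v hv
    by_cases hvx : v = x
    · refine ⟨y, ⟨fun h => hdisj.ne_of_mem h (Or.inr rfl) rfl, by rw [hvx]; exact hadj⟩, ?_⟩
      intro u' ⟨_, hadj'⟩
      rw [hvx] at hadj'
      have : u' ∈ G.neighborSet x := (G.mem_neighborSet x u').mpr hadj'
      rwa [hnx, Set.mem_singleton_iff] at this
    by_cases hvy : v = y
    · refine ⟨x, ⟨fun h => hdisj.ne_of_mem h (Or.inl rfl) rfl, by rw [hvy]; exact hadj.symm⟩, ?_⟩
      intro u' ⟨_, hadj'⟩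
      rw [hvy] at hadj'
      have : u' ∈ G.neighborSet y := (G.mem_neighborSet y u').mpr hadj'
      rwa [hny, Set.mem_singleton_iff] at this
    · have hv' : v ∉ ({x, y} : Set V) ∪ T := by
        intro h
        rcases h with h | h
        · rcases h with h | h <;> simp_all
        · exact hv h
      obtain ⟨u, ⟨huS, huadj⟩, huniq⟩ := hT v hv'
      refine ⟨u, ⟨fun h => huS (Or.inr h), huadj⟩, ?_⟩
      intro u' ⟨hu'T, hadj'⟩
      have hu' : u' ∉ ({x, y} : Set V) ∪ T := by
        intro h
        rcases h with h | h
        · simp only [Set.mem_insert_iff, Set.mem_singleton_iff] at h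
          rcases h with h | h
          · rw [h] at hadj'; exact hvy (hax v hadj')
          · rw [h] at hadj'; exact hvx (hay v hadj')
        · exact hu'T h
      exact huniq u' ⟨hu', hadj'⟩
  refine ⟨part1, part2, ?_⟩
  constructor
  · rintro ⟨S, hSk, hS⟩
    refine ⟨S \ {x, y}, Set.disjoint_sdiff_left, ?_, part1 S hS⟩
    exact le_trans (Set.ncard_le_ncard Set.diff_subset (Set.toFinite S)) hSk
  · rintro ⟨T, hdisj, hTk, hT⟩
    exact ⟨T, hTk, part2 T hdisj hT⟩
end
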